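/- arXiv:2101.03830 — 2 statements merged into one kernel-verified Lean document; each statement's English description precedes it below -/
import Mathlib

section
/- Let L : E × E → ℝ be of class C¹ and X : E → E differentiable at every point. Define p : E → E by p(q) := ∇_vL(q, X q), and assume: (a) p is differentiable with symmetric derivative, i.e. ⟪fderiv p q u, v⟫ = ⟪fderiv p q v, u⟫ for all q, u, v (the condition X*ω_L = 0); and (b) the Lagrangian energy along X, q ↦ ⟪X q, p q⟫ − L(q, X q), is constant on E. Then for every q ∈ E, fderiv p q (X q) = ∇_qL(q, X q); that is, the Lagrangian dynamics is tangent to the image of X. -/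
open scoped Gradient RealInnerProductSpace

/-- The gradient at `q` of the partial map `q' ↦ L (q', v)`. -/
noncomputable def gradQ {n : ℕ}
    (L : EuclideanSpace ℝ (Fin n) × EuclideanSpace ℝ (Fin n) → ℝ)
    (q v : EuclideanSpace ℝ (Fin n)) : EuclideanSpace ℝ (Fin n) :=
  ∇ (fun q' => L (q', v)) q

/-- The gradient at `v` of the partial map `v' ↦ L (q, v')`. -/
noncomputable def gradV {n : ℕ}
    (L : EuclideanSpace ℝ (Fin n) × EuclideanSpace ℝ (Fin n) → ℝ)
    (q v : EuclideanSpace ℝ (Fin n)) : EuclideanSpace ℝ (Fin n) :=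
  ∇ (fun v' => L (q, v')) v

/-! Differentiating the constant energy `⟪X q, p q⟫ - L (q, X q)` in a direction `u`, the terms
`⟪DX u, p q⟫` and `∂ᵥL (DX u)` cancel because `p q` represents `∂ᵥL`, leaving
`⟪X q, Dp u⟫ = ∂_qL u`. Symmetry of `Dp` turns the left side into `⟪Dp (X q), u⟫`. -/

section Energy

variable {E F : Type*} [NormedAddCommGroup E] [NormedSpace ℝ E]
  [NormedAddCommGroup F] [InnerProductSpace ℝ F]

noncomputable def pullbackEnergy (L : E × F → ℝ) (X p : E → F) (q : E) : ℝ :=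
  ⟪X q, p q⟫ - L (q, X q)

theorem hasFDerivAt_pullbackEnergy {L : E × F → ℝ} {X p : E → F} {q : E}
    (hL : DifferentiableAt ℝ L (q, X q)) (hX : DifferentiableAt ℝ X q)
    (hp : DifferentiableAt ℝ p q) :
    HasFDerivAt (pullbackEnergy L X p)
      ((fderivInnerCLM ℝ (X q, p q)).comp ((fderiv ℝ X q).prod (fderiv ℝ p q)) -
        (fderiv ℝ L (q, X q)).comp ((ContinuousLinearMap.id ℝ E).prod (fderiv ℝ X q))) q :=
  (hX.hasFDerivAt.inner ℝ hp.hasFDerivAt).sub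
    (hL.hasFDerivAt.comp q ((hasFDerivAt_id q).prodMk hX.hasFDerivAt))

theorem inner_fderiv_momentum_eq_of_pullbackEnergy_const
    {L : E × F → ℝ} {X p : E → F} {q : E}
    (hL : DifferentiableAt ℝ L (q, X q)) (hX : DifferentiableAt ℝ X q)
    (hp : DifferentiableAt ℝ p q)
    (hmomentum : ∀ w, ⟪p q, w⟫ = fderiv ℝ L (q, X q) (0, w))
    (henergy : ∀ q', pullbackEnergy L X p q' = pullbackEnergy L X p q) (u : E) :
    ⟪X q, fderiv ℝ p q u⟫ = fderiv ℝ L (q, X q) (u, 0) := by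
  have hderiv := (hasFDerivAt_pullbackEnergy hL hX hp).fderiv
  rw [show pullbackEnergy L X p = fun _ => pullbackEnergy L X p q from funext henergy,
    fderiv_const_apply] at hderiv
  have hzero := congrArg (fun φ => φ u) hderiv
  have hsplit : (u, fderiv ℝ X q u) = ((u, 0) : E × F) + (0, fderiv ℝ X q u) := by simp
  simp only [zero_apply, sub_apply, ContinuousLinearMap.comp_apply,
    ContinuousLinearMap.prod_apply, ContinuousLinearMap.id_apply, fderivInnerCLM_apply, hsplit,
    map_add, ← hmomentum, real_inner_comm (fderiv ℝ X q u)] at hzero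
  linarith

end Energy

section PartialGradients

variable {n : ℕ} {L : EuclideanSpace ℝ (Fin n) × EuclideanSpace ℝ (Fin n) → ℝ}
  {q v : EuclideanSpace ℝ (Fin n)}

theorem inner_gradQ (hL : DifferentiableAt ℝ L (q, v)) (u : EuclideanSpace ℝ (Fin n)) :
    ⟪gradQ L q v, u⟫ = fderiv ℝ L (q, v) (u, 0) := by
  have hpartial : HasFDerivAt (fun q' => L (q', v)) ((fderiv ℝ L (q, v)).comp (.inl ℝ _ _)) q :=
    hL.hasFDerivAt.comp q (hasFDerivAt_prodMk_left q v)
  rw [gradQ, inner_gradient_left, hpartial.fderiv]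
  rfl

theorem inner_gradV (hL : DifferentiableAt ℝ L (q, v)) (w : EuclideanSpace ℝ (Fin n)) :
    ⟪gradV L q v, w⟫ = fderiv ℝ L (q, v) (0, w) := by
  have hpartial : HasFDerivAt (fun v' => L (q, v')) ((fderiv ℝ L (q, v)).comp (.inr ℝ _ _)) v :=
    hL.hasFDerivAt.comp v (hasFDerivAt_prodMk_right q v)
  rw [gradV, inner_gradient_left, hpartial.fderiv]
  rfl

end PartialGradients

/-- If the momentum map `p q = ∇ᵥL (q, X q)` of a vector field `X` has symmetric derivative
(`X*ω_L = 0`) and the Lagrangian energy along `X` is constant, then the Lagrangian dynamics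
is tangent to the image of `X`: `fderiv p q (X q) = ∇_qL (q, X q)` for all `q`. -/
theorem lagrangian_dynamics_tangent_to_image {n : ℕ}
    (L : EuclideanSpace ℝ (Fin n) × EuclideanSpace ℝ (Fin n) → ℝ)
    (hL : ContDiff ℝ 1 L)
    (X : EuclideanSpace ℝ (Fin n) → EuclideanSpace ℝ (Fin n))
    (hX : ∀ q, DifferentiableAt ℝ X q)
    (p : EuclideanSpace ℝ (Fin n) → EuclideanSpace ℝ (Fin n))
    (hp : ∀ q, p q = gradV L q (X q))
    (hpdiff : ∀ q, DifferentiableAt ℝ p q)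
    (hsymm : ∀ q u v, ⟪fderiv ℝ p q u, v⟫ = ⟪fderiv ℝ p q v, u⟫)
    (henergy : ∀ q q', ⟪X q, p q⟫ - L (q, X q) = ⟪X q', p q'⟫ - L (q', X q')) :
    ∀ q, fderiv ℝ p q (X q) = gradQ L q (X q) := by
  intro q
  have hLd : Differentiable ℝ L := hL.differentiable one_ne_zero
  refine ext_inner_right ℝ fun u => ?_
  rw [← hsymm q u (X q), real_inner_comm, inner_gradQ (hLd _)]
  refine inner_fderiv_momentum_eq_of_pullbackEnergy_const (hLd _) (hX q) (hpdiff q)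
    (fun w => ?_) (fun q' => (henergy q q').symm) u
  rw [hp q, inner_gradV (hLd _)]
end

section
/- Let L : E × E → ℝ be of class C¹ and X : E → E differentiable at every point, with momentum map p(q) := ∇_vL(q, X q). Assume: (a) p is differentiable with symmetric derivative, i.e. ⟪fderiv p q u, v⟫ = ⟪fderiv p q v, u⟫ for all q, u, v; and (b) the function q ↦ ⟪X q, p q⟫ − L(q, X q) is constant on E (X is a solution of the Lagrangian Hamilton–Jacobi problem). Then for every curve γ : ℝ → E with γ'(t) = X(γ t) for all t, the Euler–Lagrange equations hold along the lifted curve (γ, X ∘ γ): for every t, the curve s ↦ p(γ s) = ∇_vL(γ s, X (γ s)) has derivative ∇_qL(γ t, X (γ t)) at t. -/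
/-!
Differentiating the constant energy `⟪X q, p q⟫ - L (q, X q)` in a direction `u`, the two terms
carrying `fderiv X q u` cancel because `p q = ∇ᵥL (q, X q)`, which leaves
`⟪X q, fderiv p q u⟫ = ⟪∇_qL (q, X q), u⟫`. Symmetry of `fderiv p q` turns this into
`fderiv p q (X q) = ∇_qL (q, X q)`, and along an integral curve `γ` of `X` the chain rule gives
`d/dt p (γ t) = fderiv p (γ t) (X (γ t))`.
-/

open scoped Gradient RealInnerProductSpace

theorem fderiv_comp_graph_apply {E F G : Type*} [NormedAddCommGroup E] [NormedSpace ℝ E]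
    [NormedAddCommGroup F] [NormedSpace ℝ F] [NormedAddCommGroup G] [NormedSpace ℝ G]
    {f : E × F → G} {g : E → F} {x : E} (hf : DifferentiableAt ℝ f (x, g x))
    (hg : DifferentiableAt ℝ g x) (u : E) :
    fderiv ℝ (fun x' => f (x', g x')) x u = fderiv ℝ f (x, g x) (u, fderiv ℝ g x u) := by
  have h : HasFDerivAt (fun x' => f (x', g x'))
      ((fderiv ℝ f (x, g x)).comp ((ContinuousLinearMap.id ℝ E).prod (fderiv ℝ g x))) x :=
    hf.hasFDerivAt.comp x ((hasFDerivAt_id x).prodMk hg.hasFDerivAt)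
  rw [h.fderiv]
  rfl

section

variable {n : ℕ} {L : EuclideanSpace ℝ (Fin n) × EuclideanSpace ℝ (Fin n) → ℝ}
  {q v : EuclideanSpace ℝ (Fin n)}

theorem fderiv_apply_eq_inner_gradQ_add_inner_gradV (hL : DifferentiableAt ℝ L (q, v))
    (u w : EuclideanSpace ℝ (Fin n)) :
    fderiv ℝ L (q, v) (u, w) = ⟪gradQ L q v, u⟫ + ⟪gradV L q v, w⟫ := by
  have hq : HasFDerivAt (fun q' => L (q', v)) ((fderiv ℝ L (q, v)).comp (.inl ℝ _ _)) q :=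
    hL.hasFDerivAt.comp q (hasFDerivAt_prodMk_left q v)
  have hv : HasFDerivAt (fun v' => L (q, v')) ((fderiv ℝ L (q, v)).comp (.inr ℝ _ _)) v :=
    hL.hasFDerivAt.comp v (hasFDerivAt_prodMk_right q v)
  rw [gradQ, gradV, inner_gradient_left, inner_gradient_left, hq.fderiv, hv.fderiv]
  exact ((fderiv ℝ L (q, v)).comp_inl_add_comp_inr (u, w)).symm

variable {X p : EuclideanSpace ℝ (Fin n) → EuclideanSpace ℝ (Fin n)}

theorem inner_fderiv_momentum_eq_inner_gradQ (hL : DifferentiableAt ℝ L (q, X q))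
    (hX : DifferentiableAt ℝ X q) (hpq : p q = gradV L q (X q)) (hp : DifferentiableAt ℝ p q)
    (henergy : fderiv ℝ (fun q' => ⟪X q', p q'⟫ - L (q', X q')) q = 0)
    (u : EuclideanSpace ℝ (Fin n)) :
    ⟪X q, fderiv ℝ p q u⟫ = ⟪gradQ L q (X q), u⟫ := by
  have h := congrArg (· u) henergy
  have hLX : DifferentiableAt ℝ (fun q' => L (q', X q')) q :=
    hL.comp q (differentiableAt_id.prodMk hX)
  simp only [fderiv_fun_sub (hX.inner ℝ hp) hLX, sub_apply, fderiv_inner_apply ℝ hX hp,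
    fderiv_comp_graph_apply hL hX, fderiv_apply_eq_inner_gradQ_add_inner_gradV hL,
    ← hpq, real_inner_comm (p q), zero_apply] at h
  linarith

theorem fderiv_momentum_apply_eq_gradQ (hL : DifferentiableAt ℝ L (q, X q))
    (hX : DifferentiableAt ℝ X q) (hpq : p q = gradV L q (X q)) (hp : DifferentiableAt ℝ p q)
    (hsymm : ∀ u w, ⟪fderiv ℝ p q u, w⟫ = ⟪fderiv ℝ p q w, u⟫)
    (henergy : fderiv ℝ (fun q' => ⟪X q', p q'⟫ - L (q', X q')) q = 0) :
    fderiv ℝ p q (X q) = gradQ L q (X q) :=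
  ext_inner_right ℝ fun u => by
    rw [hsymm, real_inner_comm, inner_fderiv_momentum_eq_inner_gradQ hL hX hpq hp henergy]

end

/-- If `X` is a solution of the Lagrangian Hamilton–Jacobi problem (its momentum map has
symmetric derivative and the energy along `X` is constant), then every integral curve `γ`
of `X` satisfies the Euler–Lagrange equations:
`d/dt ∇ᵥL (γ t, X (γ t)) = ∇_qL (γ t, X (γ t))`. -/
theorem eulerLagrange_along_integral_curves {n : ℕ}
    (L : EuclideanSpace ℝ (Fin n) × EuclideanSpace ℝ (Fin n) → ℝ)
    (hL : ContDiff ℝ 1 L)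
    (X : EuclideanSpace ℝ (Fin n) → EuclideanSpace ℝ (Fin n))
    (hX : ∀ q, DifferentiableAt ℝ X q)
    (p : EuclideanSpace ℝ (Fin n) → EuclideanSpace ℝ (Fin n))
    (hp : ∀ q, p q = gradV L q (X q))
    (hpdiff : ∀ q, DifferentiableAt ℝ p q)
    (hsymm : ∀ q u v, ⟪fderiv ℝ p q u, v⟫ = ⟪fderiv ℝ p q v, u⟫)
    (henergy : ∀ q q', ⟪X q, p q⟫ - L (q, X q) = ⟪X q', p q'⟫ - L (q', X q'))
    (γ : ℝ → EuclideanSpace ℝ (Fin n))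
    (hγ : ∀ t, HasDerivAt γ (X (γ t)) t) :
    ∀ t, HasDerivAt (fun s => p (γ s)) (gradQ L (γ t) (X (γ t))) t := by
  intro t
  set q := γ t
  have hstationary : fderiv ℝ (fun q' => ⟪X q', p q'⟫ - L (q', X q')) q = 0 := by
    rw [funext fun q' => henergy q' q, fderiv_const_apply]
  rw [← fderiv_momentum_apply_eq_gradQ (hL.differentiable one_ne_zero _) (hX q) (hp q)
    (hpdiff q) (hsymm q) hstationary]
  exact (hpdiff q).hasFDerivAt.comp_hasDerivAt t (hγ t)
end
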